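/- Let G = G_5(x_0 x_1 x_2⁻¹) be the cyclically presented group with relators x_i x_{i+1} x_{i+2}⁻¹ for i modulo 5 (Conway's original Fibonacci group). Then G is cyclic of order 11, and the shift acts freely on its nonidentity elements: for every g ∈ G with g ≠ 1 and every j with 1 ≤ j ≤ 4, θ^j(g) ≠ g; thus the orbits of the shift partition the ten nonidentity elements of G into two disjoint 5-cycles. -/

import Mathlib

/-!
With `a = x₀` and `b = x₁` the relations give `x₂ = ab`, `x₃ = bab`, `x₄ = ba⁻¹` and
`x₃ = a²b⁻¹`, hence `b a b² = a²` and `b² = a³ b a`. These force `b a⁴ b = a`, so `b`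
commutes with `a⁵`; squaring `a³ = b² a⁻¹ b⁻¹` then gives `a⁶ = b a⁻⁵ b⁻¹ = a⁻⁵`,
i.e. `a¹¹ = 1`. So `a` is a power of `a⁵`, `a` and `b` commute, and `b = a⁴`.
By the cyclic symmetry `x_{i+1} = x_i⁴` for every `i`, so `G` is generated by `x₀`,
of order dividing `11`, and `x_i ↦ 4^i ∈ ℤ/11` shows that the order is `11`.
The shift is therefore `g ↦ g⁴`, and `4` has order `5` modulo `11`.
-/

namespace CPG

/-- The free group on generators `x_0, …, x_{n-1}` indexed by `ZMod n`. -/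
abbrev FG (n : ℕ) := FreeGroup (ZMod n)

/-- The automorphism of the free group sending `x_j` to `x_{j+i}`. -/
def shiftA (n : ℕ) (i : ZMod n) : MulAut (FG n) :=
  FreeGroup.freeGroupCongr (Equiv.addRight i)

/-- The shift automorphism `θ` of the free group, `x_j ↦ x_{j+1}`. -/
def shiftAut (n : ℕ) : MulAut (FG n) := shiftA n 1

/-- The `θ`-orbit of a word `w`: the relator set of the cyclic presentation `P_n(w)`. -/
def rels (n : ℕ) (w : FG n) : Set (FG n) := Set.range fun i : ZMod n => shiftA n i w

/-- The cyclically presented group `G_n(w)`. -/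
abbrev Gp (n : ℕ) (w : FG n) := PresentedGroup (rels n w)

lemma shiftA_shiftA (n : ℕ) (i j : ZMod n) (x : FG n) :
    shiftA n i (shiftA n j x) = shiftA n (j + i) x := by
  show FreeGroup.map _ (FreeGroup.map _ x) = FreeGroup.map _ x
  rw [FreeGroup.map.comp]
  have h : (⇑(Equiv.addRight i) ∘ ⇑(Equiv.addRight j)) = ⇑(Equiv.addRight (j + i)) := by
    funext z
    simp [add_assoc]
  rw [h]

lemma image_shiftAut_rels (n : ℕ) (w : FG n) :
    (shiftAut n) '' rels n w = rels n w := by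
  ext r
  constructor
  · rintro ⟨s, ⟨i, rfl⟩, rfl⟩
    exact ⟨i + 1, (shiftA_shiftA n 1 i w).symm⟩
  · rintro ⟨i, rfl⟩
    refine ⟨shiftA n (i - 1) w, ⟨i - 1, rfl⟩, ?_⟩
    rw [shiftAut, shiftA_shiftA, sub_add_cancel]

lemma map_normalClosure_rels (n : ℕ) (w : FG n) :
    (Subgroup.normalClosure (rels n w)).map (shiftAut n).toMonoidHom
      = Subgroup.normalClosure (rels n w) := by
  rw [Subgroup.map_normalClosure (rels n w) (shiftAut n).toMonoidHom (shiftAut n).surjective]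
  congr 1
  exact image_shiftAut_rels n w

/-- The shift automorphism `θ` of the cyclically presented group `G_n(w)`. -/
def shiftG (n : ℕ) (w : FG n) : MulAut (Gp n w) :=
  QuotientGroup.congr (Subgroup.normalClosure (rels n w)) (Subgroup.normalClosure (rels n w))
    (shiftAut n) (map_normalClosure_rels n w)

/-- The generator `x_k` (subscript mod `n`). -/
def xg (n : ℕ) (k : ℤ) : FG n := FreeGroup.of (k : ZMod n)

/-- The word `x_0 x_k x_l`. -/
def wkl (n : ℕ) (k l : ℤ) : FG n := xg n 0 * xg n k * xg n l

/-- The cyclically presented group `G_n(k,l) = G_n(x_0 x_k x_l)`. -/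
abbrev Gkl (n : ℕ) (k l : ℤ) := Gp n (wkl n k l)

/-- The shift automorphism of `G_n(k,l)`. -/
def shiftKL (n : ℕ) (k l : ℤ) : MulAut (Gkl n k l) := shiftG n (wkl n k l)

end CPG


namespace CPG

/-- The word `x₀ x₁ x₂⁻¹` defining Conway's original Fibonacci group `G_5(x₀x₁x₂⁻¹)`. -/
def wFib : FG 5 :=
  FreeGroup.of (0 : ZMod 5) * FreeGroup.of (1 : ZMod 5) * (FreeGroup.of (2 : ZMod 5))⁻¹

end CPG

section FibonacciRelations

variable {G : Type*} [Group G]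

theorem eq_pow_four_and_pow_eleven_eq_one {a b : G} (h₁ : b * a * b ^ 2 = a ^ 2)
    (h₂ : b ^ 2 = a ^ 3 * b * a) : b = a ^ 4 ∧ a ^ 11 = 1 := by
  have hbab : b * a ^ 4 * b = a := by
    apply mul_right_cancel (b := a)
    calc b * a ^ 4 * b * a = b * a * (a ^ 3 * b * a) := by group
      _ = a * a := by rw [← h₂, h₁, sq]
  have hc : Commute b (a ^ 5) := by
    calc b * a ^ 5 = b * a ^ 4 * (b * a ^ 4 * b) := by rw [hbab]; group
      _ = (b * a ^ 4 * b) * a ^ 4 * b := by group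
      _ = a ^ 5 * b := by rw [hbab]; group
  have hba : b * a⁻¹ * b = (a ^ 4)⁻¹ := by
    calc b * a⁻¹ * b = b * (a ^ 5)⁻¹ * (a ^ 4 * b) := by group
      _ = (a ^ 5)⁻¹ * (b * a ^ 4 * b) := by rw [hc.inv_right.eq]; group
      _ = (a ^ 4)⁻¹ := by rw [hbab]; group
  have h11 : a ^ 11 = 1 := by
    have ha3 : a ^ 3 = b * b * a⁻¹ * b⁻¹ := by rw [← sq, h₂]; group
    have ha6 : a ^ 6 = (a ^ 5)⁻¹ := by
      calc a ^ 6 = a ^ 3 * a ^ 3 := by group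
        _ = b * (b * a⁻¹ * b) * a⁻¹ * b⁻¹ := by rw [ha3]; group
        _ = b * (a ^ 5)⁻¹ * b⁻¹ := by rw [hba]; group
        _ = (a ^ 5)⁻¹ := by rw [hc.inv_right.eq]; group
    calc a ^ 11 = a ^ 6 * a ^ 5 := by group
      _ = 1 := by rw [ha6, inv_mul_cancel]
  have hab : Commute a b := by
    have ha : a = (a ^ 5) ^ 9 := by
      rw [← pow_mul, show 5 * 9 = 11 * 4 + 1 by norm_num, pow_succ, pow_mul, h11, one_pow,
        one_mul]
    rw [ha]
    exact (hc.pow_right 9).symm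
  refine ⟨mul_right_cancel (b := b) ?_, h11⟩
  rw [← sq, h₂, mul_assoc, ← hab.eq, ← mul_assoc, ← pow_succ]

theorem two_generator_rels_of_fib5 {a b c d e : G} (h0 : a * b = c) (h1 : b * c = d)
    (h2 : c * d = e) (h3 : d * e = a) (h4 : e * a = b) :
    b * a * b ^ 2 = a ^ 2 ∧ b ^ 2 = a ^ 3 * b * a := by
  have hbab : b * a * b ^ 2 = a ^ 2 :=
    calc b * a * b ^ 2 = b * (a * b) * b := by simp only [sq, mul_assoc]
      _ = d * e * a := by rw [h0, h1, ← h4]; group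
      _ = a ^ 2 := by rw [h3, sq]
  refine ⟨hbab, ?_⟩
  calc b ^ 2 = b * (e * a) := by rw [h4, sq]
    _ = b * (a * b * (b * (a * b)) * a) := by rw [← h2, ← h1, ← h0]
    _ = b * a * b ^ 2 * a * b * a := by simp only [sq, mul_assoc]
    _ = a ^ 3 * b * a := by rw [hbab]; group

theorem succ_eq_pow_four_of_fib5 (x : ZMod 5 → G) (hx : ∀ i, x i * x (i + 1) = x (i + 2))
    (i : ZMod 5) : x (i + 1) = x i ^ 4 ∧ x i ^ 11 = 1 := by
  have hy (j : ZMod 5) : x (i + j) * x (i + (j + 1)) = x (i + (j + 2)) := by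
    simpa only [add_assoc] using hx (i + j)
  obtain ⟨h₁, h₂⟩ := two_generator_rels_of_fib5 (hy 0) (hy 1) (hy 2) (hy 3) (hy 4)
  simpa using eq_pow_four_and_pow_eleven_eq_one h₁ h₂

end FibonacciRelations

theorem apply_eq_pow_of_mem_zpowers {G F : Type*} [Group G] [FunLike F G G]
    [MonoidHomClass F G G] (f : F) {g y : G} {n : ℕ} (hf : f g = g ^ n)
    (hy : y ∈ Subgroup.zpowers g) : f y = y ^ n := by
  obtain ⟨k, rfl⟩ := hy
  rw [map_zpow, hf, ← zpow_natCast, ← zpow_natCast, ← zpow_mul, ← zpow_mul, mul_comm]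

theorem MulAut.pow_apply_eq_pow_pow {G : Type*} [Group G] (f : MulAut G) {n : ℕ}
    (hf : ∀ y, f y = y ^ n) (j : ℕ) (y : G) : (f ^ j) y = y ^ n ^ j := by
  induction j generalizing y with
  | zero => simp
  | succ j ih => rw [pow_succ, MulAut.mul_apply, hf, ih, ← pow_mul, pow_succ, mul_comm]

instance fact_prime_eleven : Fact (Nat.Prime 11) := ⟨by norm_num⟩

namespace CPG

def fibGen (i : ZMod 5) : Gp 5 wFib := PresentedGroup.of i

lemma shiftA_wFib (i : ZMod 5) :
    shiftA 5 i wFib = FreeGroup.of i * FreeGroup.of (i + 1) * (FreeGroup.of (i + 2))⁻¹ := by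
  simp [shiftA, wFib, add_comm]

lemma fibGen_mul_fibGen (i : ZMod 5) : fibGen i * fibGen (i + 1) = fibGen (i + 2) := by
  have h := PresentedGroup.one_of_mem (show shiftA 5 i wFib ∈ rels 5 wFib from ⟨i, rfl⟩)
  rwa [shiftA_wFib, map_mul, map_mul, map_inv, mul_inv_eq_one] at h

lemma fibGen_succ (i : ZMod 5) : fibGen (i + 1) = fibGen i ^ 4 :=
  (succ_eq_pow_four_of_fib5 fibGen fibGen_mul_fibGen i).1

lemma fibGen_pow_eleven (i : ZMod 5) : fibGen i ^ 11 = 1 :=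
  (succ_eq_pow_four_of_fib5 fibGen fibGen_mul_fibGen i).2

lemma shiftG_fibGen (i : ZMod 5) : shiftG 5 wFib (fibGen i) = fibGen (i + 1) := rfl

-- `x_i ↦ 4 ^ i` respects the relations because `4 ^ 2 = 4 + 1` in `ZMod 11`.
def toZMod11 : Gp 5 wFib →* Multiplicative (ZMod 11) :=
  PresentedGroup.toGroup (f := fun i => Multiplicative.ofAdd (4 ^ i.val)) <| by
    rintro _ ⟨i, rfl⟩
    dsimp only
    rw [shiftA_wFib]
    simp only [map_mul, map_inv, FreeGroup.lift_apply_of]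
    revert i
    decide

lemma fibGen_zero_ne_one : fibGen 0 ≠ 1 := fun h => by
  have h' : toZMod11 (fibGen 0) = 1 := by rw [h, map_one]
  rw [toZMod11, fibGen, PresentedGroup.toGroup.of] at h'
  exact absurd h' (by decide)

lemma mem_zpowers_fibGen_zero (g : Gp 5 wFib) : g ∈ Subgroup.zpowers (fibGen 0) := by
  refine PresentedGroup.generated_by _ _ (fun i => ?_) g
  have hn (n : ℕ) : fibGen n ∈ Subgroup.zpowers (fibGen 0) := by
    induction n with
    | zero => exact Subgroup.mem_zpowers _
    | succ n ih => simpa only [Nat.cast_succ, fibGen_succ] using pow_mem ih 4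
  have hi := hn i.val
  rwa [ZMod.natCast_zmod_val] at hi

lemma card_eq_eleven : Nat.card (Gp 5 wFib) = 11 := by
  rw [← orderOf_eq_card_of_forall_mem_zpowers mem_zpowers_fibGen_zero]
  exact orderOf_eq_prime (fibGen_pow_eleven 0) fibGen_zero_ne_one

lemma shiftG_apply (g : Gp 5 wFib) : shiftG 5 wFib g = g ^ 4 :=
  apply_eq_pow_of_mem_zpowers _ ((shiftG_fibGen 0).trans (fibGen_succ 0))
    (mem_zpowers_fibGen_zero g)

end CPG

/-- Conway's original Fibonacci group `G = G_5(x₀x₁x₂⁻¹)` is cyclic of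
order `11`, and the shift acts freely on its ten nonidentity elements (so the shift
orbits partition them into two disjoint `5`-cycles). -/
theorem statement19 :
    IsCyclic (CPG.Gp 5 CPG.wFib) ∧ Nat.card (CPG.Gp 5 CPG.wFib) = 11 ∧
    ∀ g : CPG.Gp 5 CPG.wFib, g ≠ 1 → ∀ j : ℕ, 1 ≤ j → j ≤ 4 →
      (CPG.shiftG 5 CPG.wFib ^ j) g ≠ g := by
  refine ⟨⟨CPG.fibGen 0, CPG.mem_zpowers_fibGen_zero⟩, CPG.card_eq_eleven, ?_⟩
  intro g hg j hj1 hj4 h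
  rw [MulAut.pow_apply_eq_pow_pow _ CPG.shiftG_apply] at h
  have hord : orderOf g = 11 := orderOf_eq_prime (CPG.card_eq_eleven ▸ pow_card_eq_one') hg
  have h4j : 4 ^ j ≡ 1 [MOD 11] := by rw [← hord, ← pow_eq_pow_iff_modEq, pow_one, h]
  interval_cases j <;> revert h4j <;> decide
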